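/- Let y, r ∈ (0,1] and ε ∈ (0,1). Write H(ε) = M_B(y(1 + rε)/(1 + ε), y/(1 + ε)). Then for 0 < y < 1 − ε, (1 − ε²)·(H(ε) − H(−ε)) equals 2·Σ_{k≥1} C(r, y, 2k+1)·(1−y)^{−2k}·ε^{2k+1}, where each coefficient C(r, y, ℓ) ≥ 0 for r ∈ [0,1], y ∈ [0,1], ℓ > 2; in particular H(ε) ≥ H(−ε). -/

import Mathlib

noncomputable def MB (z θ : ℝ) : ℝ :=
  z * Real.log (θ / z) + (1 - z) * Real.log ((1 - θ) / (1 - z))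

/-- The series coefficients `C(r, y, ℓ)` (for `ℓ > 2`). -/
noncomputable def Cser (r y : ℝ) (ℓ : ℕ) : ℝ :=
  r ^ (ℓ - 2) * (1 - y) ^ (ℓ - 1) / ((ℓ : ℝ) - 2) - r ^ ℓ * (1 - y) ^ (ℓ - 1) / ℓ -
    ((1 - r * y) * (1 - y) / ((ℓ : ℝ) - 2)) *
      (r ^ (ℓ - 2) * (1 - y) ^ (ℓ - 2) + 1 - (1 - r * y) ^ (ℓ - 2)) +
    (1 / (ℓ : ℝ)) * (r ^ ℓ * (1 - y) ^ ℓ + 1 - (1 - r * y) ^ ℓ) -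
    ((1 - r) * y / ((ℓ : ℝ) - 1)) *
      (r ^ (ℓ - 1) * (1 - y) ^ (ℓ - 1) + 1 - (1 - r * y) ^ (ℓ - 1))

/-- `H(ε) = M_B(y(1 + rε)/(1 + ε), y/(1 + ε))`. -/
noncomputable def Hfun (y r ε : ℝ) : ℝ := MB (y * (1 + r * ε) / (1 + ε)) (y / (1 + ε))

/-!
Multiplying by `1 - ε² = (1 - ε)(1 + ε)` turns `H(ε)` into a sum of three terms
`(q₀ + q₁ ε + q₂ ε²) · log (1 + c ε)`, with `c = r`, `1/(1-y)` and `(1-ry)/(1-y)`.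
For each of them the odd part `P(ε) log(1 + cε) - P(-ε) log(1 - cε)` is
`(q₀ + q₂ε²)(log(1 + cε) - log(1 - cε)) + q₁ε log(1 - c²ε²)`, whose power series is explicit and
contains only odd powers of `ε`. The three `ε¹` terms cancel, and the coefficient of `ε^ℓ`
collects to `C(r, y, ℓ) (1 - y)^(1-ℓ)`. Finally, `C(r, y, ℓ)` is a positive combination of two
expressions `n·ry + (1 - ry)^n - 1 + y rⁿ (1-y)^(n-1)`, which are nonnegative by Bernoulli's
inequality.
-/

open Real

noncomputable def quadMulLog (q₀ q₁ q₂ c ε : ℝ) : ℝ :=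
  (q₀ + q₁ * ε + q₂ * ε ^ 2) * log (1 + c * ε)

noncomputable def quadMulLogOddCoeff (q₀ q₁ q₂ c : ℝ) (ℓ : ℕ) : ℝ :=
  q₀ * c ^ ℓ / ℓ - q₁ * c ^ (ℓ - 1) / ((ℓ : ℝ) - 1) + q₂ * c ^ (ℓ - 2) / ((ℓ : ℝ) - 2)

theorem hasSum_quadMulLog_sub_quadMulLog_neg (q₀ q₁ q₂ c : ℝ) {ε : ℝ} (h : |c * ε| < 1) :
    HasSum
      (fun k : ℕ => 2 * quadMulLogOddCoeff q₀ q₁ q₂ c (2 * (k + 1) + 1) * ε ^ (2 * (k + 1) + 1))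
      (quadMulLog q₀ q₁ q₂ c ε - quadMulLog q₀ q₁ q₂ c (-ε) - 2 * q₀ * c * ε) := by
  have hodd := hasSum_log_sub_log_of_abs_lt_one h
  have heven := hasSum_pow_div_log_of_abs_lt_one (x := (c * ε) ^ 2)
    (by simpa [abs_pow] using pow_lt_one₀ (abs_nonneg _) h two_ne_zero)
  have hlog : log (1 - (c * ε) ^ 2) = log (1 + c * ε) + log (1 - c * ε) := by
    obtain ⟨h₁, h₂⟩ := abs_lt.1 h
    rw [← log_mul (by linarith) (by linarith)]
    ring_nf
  have hsum := (((hasSum_nat_add_iff' 1).mpr hodd).mul_left q₀).add (hodd.mul_left (q₂ * ε ^ 2))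
    |>.add (heven.mul_left (-(q₁ * ε)))
  convert hsum.congr_fun fun k => ?_ using 1
  · rfl -- two defeq `AddCommMonoid ℝ` instances
  · simp only [quadMulLog, hlog, mul_neg, ← sub_eq_add_neg, Finset.sum_range_one, Nat.cast_zero]
    ring
  have h₃ : ((2 * (k + 1) + 1 : ℕ) : ℝ) = 2 * k + 3 := by push_cast; ring
  have h₂ : (2 * k + 3 : ℝ) - 1 = 2 * k + 2 := by ring
  have h₁ : (2 * k + 3 : ℝ) - 2 = 2 * k + 1 := by ring
  rw [quadMulLogOddCoeff, show 2 * (k + 1) + 1 - 1 = 2 * k + 2 by omega,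
    show 2 * (k + 1) + 1 - 2 = 2 * k + 1 by omega, h₃, h₂, h₁]
  push_cast
  field_simp
  ring

theorem one_sub_sq_mul_Hfun {y ε : ℝ} (r : ℝ) (hy₀ : y ≠ 0) (hy₁ : 1 - y ≠ 0) (hε : 1 + ε ≠ 0)
    (hθ : 1 + (1 - y)⁻¹ * ε ≠ 0) (hz : 1 + (1 - r * y) / (1 - y) * ε ≠ 0) :
    (1 - ε ^ 2) * Hfun y r ε =
      quadMulLog (-y) (y * (1 - r)) (y * r) r ε
        + quadMulLog (1 - y) (y * (1 - r)) (-(1 - r * y)) (1 - y)⁻¹ ε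
        - quadMulLog (1 - y) (y * (1 - r)) (-(1 - r * y)) ((1 - r * y) / (1 - y)) ε := by
  have hθz : y / (1 + ε) / (y * (1 + r * ε) / (1 + ε)) = (1 + r * ε)⁻¹ := by
    field_simp
  have hratio : (1 - y / (1 + ε)) / (1 - y * (1 + r * ε) / (1 + ε)) =
      (1 + (1 - y)⁻¹ * ε) / (1 + (1 - r * y) / (1 - y) * ε) := by
    field_simp
    ring
  rw [Hfun, MB, hθz, hratio, log_inv, log_div hθ hz]
  unfold quadMulLog
  field_simp
  ring

theorem quadMulLogOddCoeff_combination (r : ℝ) {y : ℝ} (hy : 1 - y ≠ 0) {ℓ : ℕ} (hℓ : 2 < ℓ) :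
    quadMulLogOddCoeff (-y) (y * (1 - r)) (y * r) r ℓ
        + quadMulLogOddCoeff (1 - y) (y * (1 - r)) (-(1 - r * y)) (1 - y)⁻¹ ℓ
        - quadMulLogOddCoeff (1 - y) (y * (1 - r)) (-(1 - r * y)) ((1 - r * y) / (1 - y)) ℓ =
      Cser r y ℓ * ((1 - y) ^ (ℓ - 1))⁻¹ := by
  obtain ⟨m, rfl⟩ : ∃ m, ℓ = m + 3 := ⟨ℓ - 3, by omega⟩
  have h₁ : ((m + 3 : ℕ) : ℝ) - 1 = m + 2 := by push_cast; ring
  have h₂ : ((m + 3 : ℕ) : ℝ) - 2 = m + 1 := by push_cast; ring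
  simp only [quadMulLogOddCoeff, Cser, h₁, h₂, show m + 3 - 1 = m + 2 by omega,
    show m + 3 - 2 = m + 1 by omega, div_pow, inv_pow, pow_succ]
  push_cast
  field_simp
  ring

theorem Cser_add_three (r y : ℝ) (m : ℕ) :
    Cser r y (m + 3) =
      (1 - y) / ((m + 1) * (m + 2)) *
          ((m + 2) * (r * y) + (1 - r * y) ^ (m + 2) - 1 + y * r ^ (m + 2) * (1 - y) ^ (m + 1))
        + 1 / ((m + 2) * (m + 3)) *
          ((m + 3) * (r * y) + (1 - r * y) ^ (m + 3) - 1 + y * r ^ (m + 3) * (1 - y) ^ (m + 2)) := by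
  have h₁ : ((m + 3 : ℕ) : ℝ) - 1 = m + 2 := by push_cast; ring
  have h₂ : ((m + 3 : ℕ) : ℝ) - 2 = m + 1 := by push_cast; ring
  simp only [Cser, h₁, h₂, show m + 3 - 1 = m + 2 by omega, show m + 3 - 2 = m + 1 by omega,
    pow_succ]
  push_cast
  field_simp
  ring

theorem Cser_nonneg {r y : ℝ} (hr₀ : 0 ≤ r) (hr₁ : r ≤ 1) (hy₀ : 0 ≤ y) (hy₁ : y ≤ 1) {ℓ : ℕ}
    (hℓ : 2 < ℓ) : 0 ≤ Cser r y ℓ := by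
  obtain ⟨m, rfl⟩ : ∃ m, ℓ = m + 3 := ⟨ℓ - 3, by omega⟩
  have hry : r * y ≤ 1 := mul_le_one₀ hr₁ hy₀ hy₁
  have hy : 0 ≤ 1 - y := by linarith
  have bracket_nonneg (n : ℕ) :
      0 ≤ n * (r * y) + (1 - r * y) ^ n - 1 + y * r ^ n * (1 - y) ^ (n - 1) := by
    have bernoulli := one_add_mul_le_pow (a := -(r * y)) (by nlinarith) n
    have : 0 ≤ y * r ^ n * (1 - y) ^ (n - 1) := by positivity
    rw [← sub_eq_add_neg] at bernoulli
    linarith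
  have h₂ := bracket_nonneg (m + 2)
  have h₃ := bracket_nonneg (m + 3)
  push_cast at h₂ h₃
  rw [Cser_add_three]
  exact add_nonneg (mul_nonneg (by positivity) h₂) (mul_nonneg (by positivity) h₃)

theorem one_add_ne_zero_of_abs_lt_one {x : ℝ} (h : |x| < 1) : 1 + x ≠ 0 := by
  linarith [neg_abs_le x]

theorem hasSum_one_sub_sq_mul_Hfun_sub_Hfun_neg {y r ε : ℝ} (hy : 0 < y) (hr₀ : 0 ≤ r)
    (hr₁ : r ≤ 1) (hε : |ε| < 1 - y) :
    HasSum
      (fun k : ℕ => 2 * (Cser r y (2 * (k + 1) + 1) * ((1 - y) ^ (2 * (k + 1)))⁻¹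
        * ε ^ (2 * (k + 1) + 1)))
      ((1 - ε ^ 2) * (Hfun y r ε - Hfun y r (-ε))) := by
  have hy₁ : 0 < 1 - y := (abs_nonneg ε).trans_lt hε
  have ha₀ : 0 < (1 - y)⁻¹ := inv_pos.2 hy₁
  have hb₀ : 0 ≤ (1 - r * y) / (1 - y) := div_nonneg (by nlinarith) hy₁.le
  have hr : |r * ε| < 1 := by
    rw [abs_mul, abs_of_nonneg hr₀]
    nlinarith [abs_nonneg ε]
  have ha : |(1 - y)⁻¹ * ε| < 1 := by
    rwa [abs_mul, abs_of_pos ha₀, inv_mul_lt_iff₀ hy₁, mul_one]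
  have hb : |(1 - r * y) / (1 - y) * ε| < 1 := by
    refine lt_of_le_of_lt ?_ ha
    rw [abs_mul, abs_mul, abs_of_nonneg hb₀, abs_of_pos ha₀, div_eq_mul_inv]
    gcongr
    exact mul_le_of_le_one_left ha₀.le (by nlinarith)
  have hne {c : ℝ} (hc : |c * ε| < 1) : 1 + c * ε ≠ 0 ∧ 1 + c * -ε ≠ 0 :=
    ⟨one_add_ne_zero_of_abs_lt_one hc,
      one_add_ne_zero_of_abs_lt_one (by rwa [mul_neg, abs_neg])⟩
  have h1 : |ε| < 1 := by linarith
  rw [mul_sub, one_sub_sq_mul_Hfun r hy.ne' hy₁.ne' (one_add_ne_zero_of_abs_lt_one h1)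
      (hne ha).1 (hne hb).1,
    ← neg_sq, one_sub_sq_mul_Hfun r hy.ne' hy₁.ne'
      (one_add_ne_zero_of_abs_lt_one (by rwa [abs_neg])) (hne ha).2 (hne hb).2]
  have hsum := ((hasSum_quadMulLog_sub_quadMulLog_neg (-y) (y * (1 - r)) (y * r) r hr).add
    (hasSum_quadMulLog_sub_quadMulLog_neg (1 - y) (y * (1 - r)) (-(1 - r * y)) _ ha)).sub
    (hasSum_quadMulLog_sub_quadMulLog_neg (1 - y) (y * (1 - r)) (-(1 - r * y)) _ hb)
  have hlinear : -y * r + (1 - y) * (1 - y)⁻¹ - (1 - y) * ((1 - r * y) / (1 - y)) = 0 := by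
    field_simp
    ring
  convert hsum.congr_fun fun k => ?_ using 1
  · rfl
  · linear_combination (2 * ε) * hlinear
  have hcoeff := quadMulLogOddCoeff_combination r hy₁.ne' (show 2 < 2 * (k + 1) + 1 by omega)
  rw [Nat.add_sub_cancel] at hcoeff
  linear_combination (-2 * ε ^ (2 * (k + 1) + 1)) * hcoeff

theorem H_series_and_nonneg (y r ε : ℝ) (hy0 : 0 < y)
    (hr0 : 0 < r) (hr1 : r ≤ 1) (hε0 : 0 < ε) (hyε : y < 1 - ε) :
    (1 - ε ^ 2) * (Hfun y r ε - Hfun y r (-ε)) =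
        2 * ∑' k : ℕ,
          Cser r y (2 * (k + 1) + 1) * ((1 - y) ^ (2 * (k + 1)))⁻¹ * ε ^ (2 * (k + 1) + 1) ∧
      (∀ r' y' : ℝ, ∀ ℓ : ℕ, 0 ≤ r' → r' ≤ 1 → 0 ≤ y' → y' ≤ 1 → 2 < ℓ →
        0 ≤ Cser r' y' ℓ) ∧
      Hfun y r (-ε) ≤ Hfun y r ε := by
  have hsum := hasSum_one_sub_sq_mul_Hfun_sub_Hfun_neg hy0 hr0.le hr1
    (by rw [abs_of_pos hε0]; linarith)
  refine ⟨by rw [← hsum.tsum_eq, tsum_mul_left],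
    fun r' y' ℓ hr₀ hr₁ hy₀ hy₁ hℓ => Cser_nonneg hr₀ hr₁ hy₀ hy₁ hℓ, ?_⟩
  have hy : 0 < 1 - y := by linarith
  have hdiff : 0 ≤ (1 - ε ^ 2) * (Hfun y r ε - Hfun y r (-ε)) := hsum.nonneg fun k =>
    mul_nonneg zero_le_two <| mul_nonneg (mul_nonneg
      (Cser_nonneg hr0.le hr1 hy0.le (by linarith) (by omega)) (by positivity)) (by positivity)
  have hε2 : 0 < 1 - ε ^ 2 := by nlinarith
  linarith [nonneg_of_mul_nonneg_right hdiff hε2]
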